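/- Let (S,d) be a δ-hyperbolic geodesic (length) metric space. Let x, y ∈ S, set r = d(x,y), and let p be the midpoint of a geodesic from x to y (i.e., p = γ_{x,y}(r/2)). Then for every R ≥ 0, the intersection of the closed balls B(x,R) ∩ B(y,R) is contained in the ball B(p, R - r/2 + 2δ). -/

import Mathlib

/-- A geodesic arc from `x` to `y`: an isometric parametrization of `[0, d(x,y)]`. -/
def IsGeodesicArc {S : Type*} [MetricSpace S] (x y : S) (γ : ℝ → S) : Prop :=
  γ 0 = x ∧ γ (dist x y) = y ∧
    ∀ s ∈ Set.Icc (0 : ℝ) (dist x y), ∀ t ∈ Set.Icc (0 : ℝ) (dist x y),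
      dist (γ s) (γ t) = |s - t|

/-- A length (geodesic) space: any two points are joined by a geodesic arc. -/
def IsLengthSpace (S : Type*) [MetricSpace S] : Prop :=
  ∀ x y : S, ∃ γ : ℝ → S, IsGeodesicArc x y γ

/-- `δ`-hyperbolicity: every point of a side of a geodesic triangle is within
distance `δ` of the union of the other two sides. -/
def IsDeltaHyperbolic (S : Type*) [MetricSpace S] (δ : ℝ) : Prop :=
  ∀ (x y z : S) (γxy γyz γxz : ℝ → S),
    IsGeodesicArc x y γxy → IsGeodesicArc y z γyz → IsGeodesicArc x z γxz →
    ∀ p ∈ γxy '' Set.Icc (0 : ℝ) (dist x y),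
      ∃ q ∈ γyz '' Set.Icc (0 : ℝ) (dist y z) ∪ γxz '' Set.Icc (0 : ℝ) (dist x z),
        dist p q ≤ δ

/-!
The midpoint `p` of `[x, y]` is at distance `r/2` from both ends. For `z` in the lunule, the
`δ`-hyperbolicity of the triangle `x y z` gives a point `q` within `δ` of `p` on `[x, z]` or on
`[y, z]`, say on `[a, z]`. Since `q` lies on a geodesic from `a` to `z`,
`d(p, z) ≤ d(q, z) + δ = d(a, z) - d(a, q) + δ ≤ d(a, z) - d(a, p) + 2δ ≤ R - r/2 + 2δ`.
-/

theorem half_dist_mem_Icc {S : Type*} [MetricSpace S] (x y : S) :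
    dist x y / 2 ∈ Set.Icc 0 (dist x y) :=
  ⟨by positivity, half_le_self dist_nonneg⟩

namespace IsGeodesicArc

variable {S : Type*} [MetricSpace S] {x y : S} {γ : ℝ → S} {t : ℝ}

theorem dist_left_apply (hγ : IsGeodesicArc x y γ) (ht : t ∈ Set.Icc 0 (dist x y)) :
    dist x (γ t) = t := by
  obtain ⟨h0, -, hiso⟩ := hγ
  rw [← h0, hiso 0 ⟨le_rfl, dist_nonneg⟩ t ht, zero_sub, abs_neg, abs_of_nonneg ht.1]

theorem dist_apply_right (hγ : IsGeodesicArc x y γ) (ht : t ∈ Set.Icc 0 (dist x y)) :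
    dist (γ t) y = dist x y - t := by
  obtain ⟨-, h1, hiso⟩ := hγ
  rw [← h1, hiso t ht _ ⟨dist_nonneg, le_rfl⟩, abs_sub_comm, h1,
    abs_of_nonneg (sub_nonneg.mpr ht.2)]

theorem dist_add_dist_eq (hγ : IsGeodesicArc x y γ) {q : S}
    (hq : q ∈ γ '' Set.Icc 0 (dist x y)) : dist x q + dist q y = dist x y := by
  obtain ⟨t, ht, rfl⟩ := hq
  rw [hγ.dist_left_apply ht, hγ.dist_apply_right ht]
  ring

theorem dist_le_of_mem_image {a z : S} (hγ : IsGeodesicArc a z γ) {p q : S}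
    (hq : q ∈ γ '' Set.Icc 0 (dist a z)) :
    dist p z ≤ dist a z - dist a p + 2 * dist p q := by
  have hsplit := hγ.dist_add_dist_eq hq
  have hap := dist_triangle a q p
  have hpz := dist_triangle p q z
  rw [dist_comm q p] at hap
  linarith

theorem dist_left_midpoint (hγ : IsGeodesicArc x y γ) :
    dist x (γ (dist x y / 2)) = dist x y / 2 :=
  hγ.dist_left_apply (half_dist_mem_Icc x y)

theorem dist_right_midpoint (hγ : IsGeodesicArc x y γ) :
    dist y (γ (dist x y / 2)) = dist x y / 2 := by
  rw [dist_comm, hγ.dist_apply_right (half_dist_mem_Icc x y)]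
  ring

end IsGeodesicArc

theorem lunule_inclusion_general {S : Type*} [MetricSpace S] (δ : ℝ)
    (hlen : IsLengthSpace S) (hhyp : IsDeltaHyperbolic S δ)
    (x y : S) (γ : ℝ → S) (hγ : IsGeodesicArc x y γ)
    (p : S) (hp : p = γ (dist x y / 2)) (R : ℝ) :
    Metric.closedBall x R ∩ Metric.closedBall y R ⊆
      Metric.closedBall p (R - dist x y / 2 + 2 * δ) := by
  subst hp
  rintro z ⟨hxz, hyz⟩
  rw [Metric.mem_closedBall, dist_comm] at hxz hyz ⊢
  obtain ⟨γyz, hγyz⟩ := hlen y z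
  obtain ⟨γxz, hγxz⟩ := hlen x z
  obtain ⟨q, hq | hq, hpq⟩ := hhyp x y z γ γyz γxz hγ hγyz hγxz _
    ⟨_, half_dist_mem_Icc x y, rfl⟩
  · have := hγyz.dist_le_of_mem_image (p := γ (dist x y / 2)) hq
    rw [hγ.dist_right_midpoint] at this
    linarith
  · have := hγxz.dist_le_of_mem_image (p := γ (dist x y / 2)) hq
    rw [hγ.dist_left_midpoint] at this
    linarith

theorem lunule_inclusion {S : Type*} [MetricSpace S] (δ : ℝ) (hδ : 0 ≤ δ)
    (hlen : IsLengthSpace S) (hhyp : IsDeltaHyperbolic S δ)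
    (x y : S) (γ : ℝ → S) (hγ : IsGeodesicArc x y γ)
    (p : S) (hp : p = γ (dist x y / 2)) (R : ℝ) (hR : 0 ≤ R) :
    Metric.closedBall x R ∩ Metric.closedBall y R ⊆
      Metric.closedBall p (R - dist x y / 2 + 2 * δ) :=
  lunule_inclusion_general δ hlen hhyp x y γ hγ p hp R
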